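/- arXiv:cs/0010036 — 2 statements merged into one kernel-verified Lean document; each statement's English description precedes it below -/
import Mathlib

section
/- If 0 < q < p, then from any configuration there is a sequence of legal moves reaching any given dual configuration. -/
/-- One step of the Game of Cards: player `i` gives a card to player `i+1` (mod `p`). -/
def step (p : ℕ) [NeZero p] (a : Fin p → ℕ) (i : Fin p) : Fin p → ℕ :=
  Function.update (Function.update a i (a i - 1)) (i + 1) (a (i + 1) + 1)

/-- The move at position `i` is legal iff the right neighbour has strictly fewer cards. -/
def legal (p : ℕ) [NeZero p] (a : Fin p → ℕ) (i : Fin p) : Prop := a (i + 1) < a i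

/-- The move relation of the Game of Cards. -/
def Move (p : ℕ) [NeZero p] (a b : Fin p → ℕ) : Prop :=
  ∃ i : Fin p, legal p a i ∧ b = step p a i

/-- `playList p a L b` : playing the (legal) moves recorded in the list `L` of positions,
starting from `a`, ends in `b`. -/
def playList (p : ℕ) [NeZero p] : (Fin p → ℕ) → List (Fin p) → (Fin p → ℕ) → Prop
  | a, [], b => b = a
  | a, i :: L, b => legal p a i ∧ playList p (step p a i) L b

/-- `dvec p a b j` is the `j`-th prefix-sum difference `(a_0+⋯+a_j) - (b_0+⋯+b_j)`. -/
def dvec (p : ℕ) (a b : Fin p → ℕ) (j : Fin p) : ℤ :=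
  ∑ i ∈ Finset.univ.filter (· ≤ j), ((a i : ℤ) - (b i : ℤ))

/-- A configuration is dual iff `p ∤ n` and every entry is `k` or `k+1` where `k = n / p`. -/
def Dual (p n : ℕ) (a : Fin p → ℕ) : Prop :=
  ¬ p ∣ n ∧ ∀ i, a i = n / p ∨ a i = n / p + 1

/-- The last index of `Fin p` (the `p`-th player). -/
def lastIdx (p : ℕ) [NeZero p] : Fin p :=
  ⟨p - 1, Nat.sub_lt (Nat.pos_of_ne_zero (NeZero.ne p)) Nat.one_pos⟩

/-- The list of configurations visited when playing the moves in `L` from `a`. -/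
def trace (p : ℕ) [NeZero p] : (Fin p → ℕ) → List (Fin p) → List (Fin p → ℕ)
  | a, [] => [a]
  | a, i :: L => a :: trace p (step p a i) L

set_option linter.unusedSectionVars false
set_option linter.unusedVariables false
open Fin.NatCast Fin.CommRing

section Basics
variable {p : ℕ} [NeZero p]

lemma GC.cast_inj {s t : ℕ} (hs : s < p) (ht : t < p) (h : (s : Fin p) = (t : Fin p)) : s = t := by
  have := congrArg Fin.val h
  rwa [Fin.val_cast_of_lt hs, Fin.val_cast_of_lt ht] at this

lemma GC.cast_ne_zero {t : ℕ} (h1 : 0 < t) (h2 : t < p) : (t : Fin p) ≠ 0 := by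
  intro h
  have := congrArg Fin.val h
  rw [Fin.val_cast_of_lt h2] at this
  simp at this; omega

lemma GC.add_one_ne (hp : 1 < p) (i : Fin p) : i + 1 ≠ i := by
  intro h
  have : i + 1 = i + 0 := by rw [h, add_zero]
  have h1 : (1 : Fin p) = 0 := add_left_cancel this
  have := congrArg Fin.val h1
  rw [Fin.val_one'] at this
  simp [Nat.mod_eq_of_lt hp] at this

lemma GC.step_self (i : Fin p) (hp : 1 < p) (a : Fin p → ℕ) : step p a i i = a i - 1 := by
  unfold step
  rw [Function.update_of_ne (fun h => (GC.add_one_ne hp i) h.symm : i ≠ i + 1),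
    Function.update_self]

lemma GC.step_succ (i : Fin p) (a : Fin p → ℕ) : step p a i (i + 1) = a (i + 1) + 1 :=
  Function.update_self _ _ _

lemma GC.step_other {i j : Fin p} (h1 : j ≠ i) (h2 : j ≠ i + 1) (a : Fin p → ℕ) :
    step p a i j = a j := by
  unfold step
  rw [Function.update_of_ne h2, Function.update_of_ne h1]

lemma GC.sum_pair {i j : Fin p} (h : i ≠ j) (f : Fin p → ℕ) :
    ∑ x, f x = f i + f j + ∑ x ∈ (Finset.univ.erase i).erase j, f x := by
  rw [← Finset.add_sum_erase _ f (Finset.mem_univ i),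
      ← Finset.add_sum_erase _ f (Finset.mem_erase.2 ⟨h.symm, Finset.mem_univ j⟩), add_assoc]

lemma GC.step_sum (hp : 1 < p) (a : Fin p → ℕ) (i : Fin p) (h1 : 1 ≤ a i) :
    ∑ x, step p a i x = ∑ x, a x := by
  have hne : i ≠ i + 1 := fun h => (GC.add_one_ne hp i) h.symm
  rw [GC.sum_pair hne (step p a i), GC.sum_pair hne a,
    GC.step_self i hp a, GC.step_succ i a]
  have : ∑ x ∈ (Finset.univ.erase i).erase (i+1), step p a i x
      = ∑ x ∈ (Finset.univ.erase i).erase (i+1), a x := by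
    apply Finset.sum_congr rfl
    intro x hx
    simp only [Finset.mem_erase] at hx
    exact GC.step_other hx.2.1 hx.1 a
  omega

lemma GC.step_sq (hp : 1 < p) (a : Fin p → ℕ) (i : Fin p) (h : a (i+1) + 2 ≤ a i) :
    ∑ x, (step p a i x)^2 < ∑ x, (a x)^2 := by
  have hne : i ≠ i + 1 := fun h => (GC.add_one_ne hp i) h.symm
  rw [GC.sum_pair hne (fun x => (step p a i x)^2), GC.sum_pair hne (fun x => (a x)^2)]
  have heq : ∑ x ∈ (Finset.univ.erase i).erase (i+1), (step p a i x)^2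
      = ∑ x ∈ (Finset.univ.erase i).erase (i+1), (a x)^2 := by
    apply Finset.sum_congr rfl
    intro x hx
    simp only [Finset.mem_erase] at hx
    rw [GC.step_other hx.2.1 hx.1 a]
  rw [heq, GC.step_self i hp a, GC.step_succ i a]
  have h2 : a i - 1 = a (i+1) + 1 + (a i - a (i+1) - 2) := by omega
  have h3 : a i = a (i+1) + 2 + (a i - a (i+1) - 2) := by omega
  set u := a (i+1)
  set e := a i - a (i+1) - 2
  rw [h2]
  apply Nat.add_lt_add_right
  rw [h3]
  nlinarith [sq_nonneg u, sq_nonneg e]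

lemma GC.reach_sum {a b : Fin p → ℕ} (hp : 1 < p) (h : Relation.ReflTransGen (Move p) a b) :
    ∑ x, b x = ∑ x, a x := by
  induction h with
  | refl => rfl
  | tail _ hmv ih =>
    obtain ⟨i, hleg, rfl⟩ := hmv
    rw [GC.step_sum hp _ i (by unfold legal at hleg; omega)]
    exact ih

end Basics

section StageOne
variable {p : ℕ} [NeZero p]

lemma GC.step_swap (hp : 1 < p) (a : Fin p → ℕ) (i : Fin p) (h : a (i+1) + 1 = a i) :
    step p a i = a ∘ (Equiv.swap i (i+1)) := by
  funext j
  by_cases h1 : j = i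
  · subst h1
    rw [GC.step_self j hp a]
    simp [Equiv.swap_apply_left]
    omega
  · by_cases h2 : j = i + 1
    · subst h2
      rw [GC.step_succ i a]
      simp [Equiv.swap_apply_right]
      omega
    · rw [GC.step_other h1 h2 a]
      simp [Equiv.swap_apply_of_ne_of_ne h1 h2]

lemma GC.lemA (hp : 1 < p) : ∀ d : ℕ, 0 < d → d < p →
    ∀ (a : Fin p → ℕ) (M : ℕ) (i : Fin p), a i = M →
    (∀ t : ℕ, 0 < t → t < d → a (i + (t : Fin p)) + 1 = M) →
    a (i + (d : Fin p)) + 2 ≤ M →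
    ∃ a', Relation.ReflTransGen (Move p) a a' ∧ (∑ j, a' j = ∑ j, a j) ∧
      ∑ j, (a' j)^2 < ∑ j, (a j)^2 := by
  intro d
  induction d with
  | zero => omega
  | succ d ih =>
    intro _ hdp a M i hai hmid hend
    by_cases hd : d = 0
    · -- base case : single strictly decreasing move at i
      subst hd
      have hcast : ((1 : ℕ) : Fin p) = 1 := Nat.cast_one
      rw [hcast] at hend
      have hleg : legal p a i := by unfold legal; omega
      refine ⟨step p a i, Relation.ReflTransGen.single ⟨i, hleg, rfl⟩, ?_, ?_⟩
      · exact GC.step_sum hp a i (by omega)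
      · exact GC.step_sq hp a i (by omega)
    · -- swap move at i, then recurse at i+1 with d
      have h1 : a (i + 1) + 1 = M := by
        have := hmid 1 (by omega) (by omega)
        rwa [Nat.cast_one] at this
      have hleg : legal p a i := by unfold legal; omega
      have hswap : step p a i = a ∘ (Equiv.swap i (i+1)) := GC.step_swap hp a i (by omega)
      set a1 := step p a i with ha1
      have hsum1 : ∑ j, a1 j = ∑ j, a j := by
        rw [hswap]; exact Equiv.sum_comp (Equiv.swap i (i+1)) a
      have hsq1 : ∑ j, (a1 j)^2 = ∑ j, (a j)^2 := by
        rw [hswap]; exact Equiv.sum_comp (Equiv.swap i (i+1)) (fun x => (a x)^2)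
      -- values of a1 at shifted positions
      have hpos : ∀ u : ℕ, 2 ≤ u → u < p → a1 (i + (u : Fin p)) = a (i + (u : Fin p)) := by
        intro u h2 hu
        apply GC.step_other
        · intro h
          have : (u : Fin p) = 0 := by
            have := add_left_cancel (h.trans (add_zero i).symm)
            exact this
          exact GC.cast_ne_zero (by omega) hu this
        · intro h
          have : (u : Fin p) = 1 := add_left_cancel h
          have := congrArg Fin.val this
          rw [Fin.val_cast_of_lt hu, Fin.val_one' p, Nat.mod_eq_of_lt hp] at this
          omega
      have hnew_i : a1 (i + 1) = M := by
        rw [ha1, GC.step_succ i a]; omega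
      have hmid' : ∀ t : ℕ, 0 < t → t < d → a1 ((i+1) + (t : Fin p)) + 1 = M := by
        intro t ht htd
        have hpe : (i+1) + (t : Fin p) = i + ((1 + t : ℕ) : Fin p) := by
          rw [Nat.cast_add, Nat.cast_one, add_assoc]
        rw [hpe, hpos (1+t) (by omega) (by omega)]
        exact hmid (1+t) (by omega) (by omega)
      have hend' : a1 ((i+1) + (d : Fin p)) + 2 ≤ M := by
        have hpe : (i+1) + (d : Fin p) = i + ((1 + d : ℕ) : Fin p) := by
          rw [Nat.cast_add, Nat.cast_one, add_assoc]
        rw [hpe, hpos (1+d) (by omega) (by omega)]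
        have : ((1 + d : ℕ) : Fin p) = ((d + 1 : ℕ) : Fin p) := by rw [Nat.add_comm]
        rw [this]
        exact hend
      obtain ⟨a', hre, hsum, hsq⟩ := ih (by omega) (by omega) a1 M (i+1) hnew_i hmid' hend'
      refine ⟨a', Relation.ReflTransGen.head ⟨i, hleg, rfl⟩ hre, by omega, by omega⟩

end StageOne

section Descend
variable {p : ℕ} [NeZero p]

lemma GC.descend (hp : 1 < p) (a : Fin p → ℕ) (hnf : ∃ i j, a j + 1 < a i) :
    ∃ a', Relation.ReflTransGen (Move p) a a' ∧ (∑ j, a' j = ∑ j, a j) ∧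
      ∑ j, (a' j)^2 < ∑ j, (a j)^2 := by
  obtain ⟨i1, j1, hij⟩ := hnf
  obtain ⟨i₀, -, hmax⟩ := Finset.exists_max_image Finset.univ a ⟨i1, Finset.mem_univ i1⟩
  set M := a i₀ with hM
  have hmax' : ∀ x, a x ≤ M := fun x => hmax x (Finset.mem_univ x)
  -- a witness position with value ≤ M - 2
  have hwit : ∃ t : ℕ, 0 < t ∧ t < p ∧ a (i₀ + (t : Fin p)) + 2 ≤ M := by
    have hj : a j1 + 2 ≤ M := by have := hmax' i1; omega
    have hne : j1 ≠ i₀ := by intro h; rw [h] at hj; omega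
    refine ⟨(j1 - i₀ : Fin p).val, ?_, (j1 - i₀ : Fin p).isLt, ?_⟩
    · rcases Nat.eq_zero_or_pos (j1 - i₀ : Fin p).val with h0 | h0
      · exfalso
        have : (j1 - i₀ : Fin p) = 0 := Fin.ext h0
        have : j1 = i₀ := by
          have := sub_eq_zero.mp this
          exact this
        exact hne this
      · exact h0
    · rw [Fin.cast_val_eq_self, add_sub_cancel]
      exact hj
  classical
  set P : ℕ → Prop := fun t => 0 < t ∧ t < p ∧ a (i₀ + (t : Fin p)) + 2 ≤ M with hP
  have hPex : ∃ t, P t := hwit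
  set d := Nat.find hPex with hd
  obtain ⟨hd0, hdp, hdval⟩ : P d := Nat.find_spec hPex
  have hmin : ∀ t, 0 < t → t < d → a (i₀ + (t : Fin p)) + 1 ≥ M := by
    intro t ht htd
    have := Nat.find_min hPex htd
    rw [hP] at this
    simp only [not_and, not_le] at this
    have h2 := this ht (by omega)
    omega
  -- largest index ≤ d-1 where the value is M
  set Q : ℕ → Prop := fun s => a (i₀ + (s : Fin p)) = M with hQ
  have hQ0 : Q 0 := by rw [hQ]; simp [hM]
  set s := Nat.findGreatest Q (d - 1) with hs
  have hsle : s ≤ d - 1 := Nat.findGreatest_le _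
  have hQs : Q s := Nat.findGreatest_spec (Nat.zero_le _) hQ0
  have hgr : ∀ t, s < t → t ≤ d - 1 → ¬ Q t := fun t h1 h2 => Nat.findGreatest_is_greatest h1 h2
  -- apply lemA at i = i₀ + s with length d - s
  set i := i₀ + (s : Fin p) with hi
  have hcast : ∀ u : ℕ, i + (u : Fin p) = i₀ + ((s + u : ℕ) : Fin p) := by
    intro u; rw [Nat.cast_add, add_assoc]
  apply GC.lemA hp (d - s) (by omega) (by omega) a M i hQs
  · intro t ht htd
    rw [hcast t]
    have h1 := hmin (s + t) (by omega) (by omega)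
    have h2 := hgr (s + t) (by omega) (by omega)
    rw [hQ] at h2
    have h3 := hmax' (i₀ + ((s + t : ℕ) : Fin p))
    omega
  · rw [hcast (d - s)]
    have : s + (d - s) = d := by omega
    rw [this]
    exact hdval

end Descend

section Slide
variable {p k : ℕ} [NeZero p]

lemma GC.slide (hp : 1 < p) (k : ℕ) : ∀ m : ℕ, 1 ≤ m → m < p →
    ∀ (a : Fin p → ℕ), (∀ i, a i = k ∨ a i = k + 1) →
    ∀ x : Fin p, a x = k + 1 → (∀ t : ℕ, 1 ≤ t → t ≤ m → a (x + (t : Fin p)) = k) →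
    ∃ a', Relation.ReflTransGen (Move p) a a' ∧ (∀ i, a' i = k ∨ a' i = k + 1) ∧
      a' x = k ∧ a' (x + (m : Fin p)) = k + 1 ∧
      ∀ j, j ≠ x → j ≠ x + (m : Fin p) → a' j = a j := by
  intro m
  induction m with
  | zero => omega
  | succ m ih =>
    intro _ hmp a hD x hx hpath
    have hone : ((1:ℕ) : Fin p) = 1 := Nat.cast_one
    have hx1 : a (x + 1) = k := by
      have := hpath 1 le_rfl (by omega); rwa [hone] at this
    have hleg : legal p a x := by unfold legal; omega
    have hxne : x ≠ x + 1 := fun h => (GC.add_one_ne hp x) h.symm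
    set a1 := step p a x with ha1
    have ha1x : a1 x = k := by rw [ha1, GC.step_self x hp a]; omega
    have ha1x1 : a1 (x + 1) = k + 1 := by rw [ha1, GC.step_succ x a]; omega
    have ha1other : ∀ j, j ≠ x → j ≠ x + 1 → a1 j = a j := fun j h1 h2 => GC.step_other h1 h2 a
    have hD1 : ∀ i, a1 i = k ∨ a1 i = k + 1 := by
      intro i
      by_cases h1 : i = x
      · left; rw [h1]; exact ha1x
      · by_cases h2 : i = x + 1
        · right; rw [h2]; exact ha1x1
        · rw [ha1other i h1 h2]; exact hD i
    by_cases hm : m = 0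
    · subst hm
      refine ⟨a1, Relation.ReflTransGen.single ⟨x, hleg, rfl⟩, hD1, ha1x, ?_, ?_⟩
      · rw [hone]; exact ha1x1
      · rw [hone]; exact ha1other
    · -- recurse from x+1
      have hshift : ∀ u : ℕ, 0 < u → u < p → (x + 1) + (u : Fin p) = x + ((1 + u : ℕ) : Fin p) := by
        intro u _ _ ; rw [Nat.cast_add, Nat.cast_one, add_assoc]
      have hposne : ∀ u : ℕ, 2 ≤ u → u < p →
          x + ((u:ℕ) : Fin p) ≠ x ∧ x + ((u:ℕ) : Fin p) ≠ x + 1 := by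
        intro u h2 hu
        constructor
        · intro h
          have : (u : Fin p) = 0 := add_left_cancel (h.trans (add_zero x).symm)
          exact GC.cast_ne_zero (by omega) hu this
        · intro h
          have h3 : (u : Fin p) = 1 := add_left_cancel h
          have := congrArg Fin.val h3
          rw [Fin.val_cast_of_lt hu, Fin.val_one' p, Nat.mod_eq_of_lt hp] at this
          omega
      have hpath1 : ∀ t : ℕ, 1 ≤ t → t ≤ m → a1 ((x+1) + (t : Fin p)) = k := by
        intro t h1 h2
        rw [hshift t (by omega) (by omega)]
        obtain ⟨hn1, hn2⟩ := hposne (1+t) (by omega) (by omega)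
        rw [ha1other _ hn1 hn2]
        exact hpath (1+t) (by omega) (by omega)
      obtain ⟨a', hre, hD', hax1, haxm, hother⟩ :=
        ih (by omega) (by omega) a1 hD1 (x+1) ha1x1 hpath1
      have hmm : x + ((m + 1 : ℕ) : Fin p) = (x + 1) + (m : Fin p) := by
        rw [Nat.cast_add, Nat.cast_one]; ring
      refine ⟨a', Relation.ReflTransGen.head ⟨x, hleg, rfl⟩ hre, hD', ?_, ?_, ?_⟩
      · -- a' x = k
        obtain ⟨hn1, hn2⟩ := hposne (1+m) (by omega) (by omega)
        have hxne2 : x ≠ (x+1) + (m : Fin p) := by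
          intro h
          apply hn1
          rw [← hshift m (by omega) (by omega), ← h]
        rw [hother x (fun h => hxne h) hxne2]
        exact ha1x
      · rw [hmm]; exact haxm
      · intro j hj1 hj2
        rw [hmm] at hj2
        by_cases hj3 : j = x + 1
        · rw [hj3, hax1, hx1]
        · rw [hother j hj3 hj2, ha1other j hj1 hj3]

end Slide

section Pack
variable {p : ℕ} [NeZero p]

lemma GC.pack (hp : 1 < p) (k : ℕ) : ∀ r : ℕ, r ≤ p →
    ∀ a : Fin p → ℕ, (∀ i, a i = k ∨ a i = k + 1) →
    (∀ t : ℕ, r ≤ t → t < p → a (t : Fin p) = k + 1) →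
    ∃ a', Relation.ReflTransGen (Move p) a a' ∧ (∀ i, a' i = k ∨ a' i = k + 1) ∧
      ∃ s ≤ r, (∀ t : ℕ, s ≤ t → t < p → a' (t : Fin p) = k + 1) ∧
        (∀ t : ℕ, t < s → a' (t : Fin p) = k) := by
  intro r
  induction r with
  | zero =>
    intro _ a hD hsuf
    exact ⟨a, Relation.ReflTransGen.refl, hD, 0, le_rfl, fun t _ ht => hsuf t (Nat.zero_le t) ht,
      fun t ht => absurd ht (by omega)⟩
  | succ r ih =>
    intro hrp a hD hsuf
    classical
    set P : ℕ → Prop := fun j => a (j : Fin p) = k + 1 with hPdef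
    set j := Nat.findGreatest P r with hj
    by_cases hP : P j
    · have hjr : j ≤ r := Nat.findGreatest_le _
      by_cases hjeq : j = r
      · -- already have a token at r
        obtain ⟨a', hre, hD', s, hs, h1, h2⟩ := ih (by omega) a hD (by
          intro t ht htp
          rcases Nat.eq_or_lt_of_le ht with h | h
          · rw [← h]; rw [← hjeq]; exact hP
          · exact hsuf t h htp)
        exact ⟨a', hre, hD', s, by omega, h1, h2⟩
      · -- slide from j to r
        have hjlt : j < r := by omega
        have hmid : ∀ t : ℕ, 1 ≤ t → t ≤ r - j → a ((j : Fin p) + (t : Fin p)) = k := by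
          intro t h1 h2
          have hcast : (j : Fin p) + (t : Fin p) = ((j + t : ℕ) : Fin p) := (Nat.cast_add _ _).symm
          rw [hcast]
          have hng := Nat.findGreatest_is_greatest (k := j + t) (P := P) (n := r) (by omega) (by omega)
          rw [hPdef] at hng
          rcases hD ((j + t : ℕ) : Fin p) with h | h
          · exact h
          · exact absurd h hng
        obtain ⟨a1, hre1, hD1, ha1j, ha1r, ha1o⟩ :=
          GC.slide hp k (r - j) (by omega) (by omega) a hD (j : Fin p) hP hmid
        have hcast2 : (j : Fin p) + ((r - j : ℕ) : Fin p) = (r : Fin p) := by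
          rw [← Nat.cast_add]; congr 1; omega
        rw [hcast2] at ha1r ha1o
        obtain ⟨a', hre, hD', s, hs, h1, h2⟩ := ih (by omega) a1 hD1 (by
          intro t ht htp
          rcases Nat.eq_or_lt_of_le ht with h | h
          · rw [← h]; exact ha1r
          · rw [ha1o (t : Fin p) (fun hc => by
                have := GC.cast_inj (by omega) (by omega) hc; omega)
              (fun hc => by
                have := GC.cast_inj (by omega) (by omega) hc; omega)]
            exact hsuf t (by omega) htp)
        exact ⟨a', Relation.ReflTransGen.trans hre1 hre, hD', s, by omega, h1, h2⟩
    · -- no token at or below r : everything below r+1 is k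
      have hnone : ∀ t : ℕ, t ≤ r → ¬ P t := by
        intro t ht hPt
        exact hP (Nat.findGreatest_spec ht hPt)
      refine ⟨a, Relation.ReflTransGen.refl, hD, r + 1, le_rfl, hsuf, ?_⟩
      intro t ht
      have := hnone t (by omega)
      rw [hPdef] at this
      rcases hD (t : Fin p) with h | h
      · exact h
      · exact absurd h this

end Pack

section Unpack
variable {p : ℕ} [NeZero p]

lemma GC.pos_inj {c' : Fin p} {t1 t2 : ℕ} (h1 : t1 < p) (h2 : t2 < p)
    (h : c' + (t1 : Fin p) = c' + (t2 : Fin p)) : t1 = t2 :=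
  GC.cast_inj h1 h2 (add_left_cancel h)

lemma GC.unpack (hp : 1 < p) (k : ℕ) (b : Fin p → ℕ) (hb : ∀ i, b i = k ∨ b i = k + 1)
    (c' : Fin p) : ∀ r : ℕ, r ≤ p → ∀ a : Fin p → ℕ, (∀ i, a i = k ∨ a i = k + 1) →
    (∀ t : ℕ, t < ((Finset.range r).filter (fun u : ℕ => b (c' + (u : Fin p)) = k + 1)).card →
      a (c' + (t : Fin p)) = k + 1) →
    (∀ t : ℕ, ((Finset.range r).filter (fun u : ℕ => b (c' + (u : Fin p)) = k + 1)).card ≤ t →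
      t < r → a (c' + (t : Fin p)) = k) →
    (∀ t : ℕ, r ≤ t → t < p → a (c' + (t : Fin p)) = b (c' + (t : Fin p))) →
    Relation.ReflTransGen (Move p) a b := by
  intro r
  induction r with
  | zero =>
    intro _ a _ _ _ h3
    have : a = b := by
      funext i
      have := h3 (i - c' : Fin p).val (Nat.zero_le _) (i - c').isLt
      rwa [Fin.cast_val_eq_self, add_sub_cancel] at this
    rw [this]
  | succ r ih =>
    intro hrp a hD h1 h2 h3
    classical
    have hNsucc : ((Finset.range (r+1)).filter (fun u : ℕ => b (c' + (u : Fin p)) = k + 1)).card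
        = if b (c' + (r : Fin p)) = k + 1
          then ((Finset.range r).filter (fun u : ℕ => b (c' + (u : Fin p)) = k + 1)).card + 1
          else ((Finset.range r).filter (fun u : ℕ => b (c' + (u : Fin p)) = k + 1)).card := by
      simp only [Finset.range_add_one, Finset.filter_insert]
      split
      · rw [Finset.card_insert_of_notMem (by simp)]
      · rfl
    set N := ((Finset.range r).filter (fun u : ℕ => b (c' + (u : Fin p)) = k + 1)).card with hNdef
    have hNle : N ≤ r := le_trans (Finset.card_filter_le _ _) (le_of_eq (Finset.card_range r))
    by_cases hbr : b (c' + (r : Fin p)) = k + 1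
    · -- b has a token at r
      have hNr1 : ((Finset.range (r+1)).filter
          (fun u : ℕ => b (c' + (u : Fin p)) = k + 1)).card = N + 1 := by
        rw [hNsucc, if_pos hbr]
      replace h1 : ∀ t : ℕ, t < N + 1 → a (c' + (t : Fin p)) = k + 1 :=
        fun t ht => h1 t (lt_of_lt_of_le ht (le_of_eq hNr1.symm))
      replace h2 : ∀ t : ℕ, N + 1 ≤ t → t < r + 1 → a (c' + (t : Fin p)) = k :=
        fun t ht1 ht2 => h2 t (le_trans (le_of_eq hNr1) ht1) ht2
      by_cases hNr : N = r
      · -- already in place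
        apply ih (by omega) a hD
        · intro t ht; exact h1 t (by omega)
        · intro t ht1 ht2; omega
        · intro t ht1 ht2
          rcases Nat.eq_or_lt_of_le ht1 with h | h
          · rw [← h, hbr]; exact h1 r (by omega)
          · exact h3 t (by omega) ht2
      · -- slide the top packed token from position N to position r
        have hNlt : N < r := lt_of_le_of_ne hNle hNr
        have hax : a (c' + ((N : ℕ) : Fin p)) = k + 1 := h1 N (by omega)
        have hcast : ∀ u : ℕ, (c' + ((N : ℕ) : Fin p)) + (u : Fin p)
            = c' + ((N + u : ℕ) : Fin p) := by
          intro u; rw [Nat.cast_add, add_assoc]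
        have hmid : ∀ t : ℕ, 1 ≤ t → t ≤ r - N →
            a ((c' + ((N : ℕ) : Fin p)) + (t : Fin p)) = k := by
          intro t ht1 ht2
          rw [hcast t]
          exact h2 (N + t) (by omega) (by omega)
        obtain ⟨a1, hre1, hD1, ha1x, ha1r, ha1o⟩ :=
          GC.slide hp k (r - N) (by omega) (by omega) a hD _ hax hmid
        rw [hcast (r - N)] at ha1r ha1o
        have hrr : (N + (r - N) : ℕ) = r := by omega
        rw [hrr] at ha1r ha1o
        have hne : ∀ t : ℕ, t < p → t ≠ N → t ≠ r →
            c' + (t : Fin p) ≠ c' + ((N : ℕ) : Fin p) ∧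
            c' + (t : Fin p) ≠ c' + ((r : ℕ) : Fin p) := by
          intro t htp htN htr
          exact ⟨fun h => htN (GC.pos_inj htp (by omega) h),
                 fun h => htr (GC.pos_inj htp (by omega) h)⟩
        refine Relation.ReflTransGen.trans hre1 (ih (by omega) a1 hD1 ?_ ?_ ?_)
        · intro t ht
          obtain ⟨hn1, hn2⟩ := hne t (by omega) (by omega) (by omega)
          rw [ha1o _ hn1 hn2]
          exact h1 t (by omega)
        · intro t ht1 ht2
          by_cases h : t = N
          · rw [h]; exact ha1x
          · obtain ⟨hn1, hn2⟩ := hne t (by omega) h (by omega)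
            rw [ha1o _ hn1 hn2]
            exact h2 t (by omega) (by omega)
        · intro t ht1 ht2
          rcases Nat.eq_or_lt_of_le ht1 with h | h
          · rw [← h, hbr]; exact ha1r
          · obtain ⟨hn1, hn2⟩ := hne t (by omega) (by omega) (by omega)
            rw [ha1o _ hn1 hn2]
            exact h3 t (by omega) ht2
    · -- no token of b at r
      have hNr1 : ((Finset.range (r+1)).filter
          (fun u : ℕ => b (c' + (u : Fin p)) = k + 1)).card = N := by
        rw [hNsucc, if_neg hbr]
      replace h1 : ∀ t : ℕ, t < N → a (c' + (t : Fin p)) = k + 1 :=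
        fun t ht => h1 t (lt_of_lt_of_le ht (le_of_eq hNr1.symm))
      replace h2 : ∀ t : ℕ, N ≤ t → t < r + 1 → a (c' + (t : Fin p)) = k :=
        fun t ht1 ht2 => h2 t (le_trans (le_of_eq hNr1) ht1) ht2
      apply ih (by omega) a hD h1
      · intro t ht1 ht2; exact h2 t ht1 (by omega)
      · intro t ht1 ht2
        rcases Nat.eq_or_lt_of_le ht1 with h | h
        · rw [← h]
          rcases hb (c' + (r : Fin p)) with hh | hh
          · rw [hh]; exact h2 r (by omega) (by omega)
          · exact absurd hh hbr
        · exact h3 t (by omega) ht2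

end Unpack

section Stage2
variable {p : ℕ} [NeZero p]

lemma GC.dual_sum (k : ℕ) (b : Fin p → ℕ) (hb : ∀ i, b i = k ∨ b i = k + 1) :
    ∑ i, b i = p * k + (Finset.univ.filter (fun i : Fin p => b i = k + 1)).card := by
  classical
  have : ∀ i : Fin p, b i = k + (if b i = k + 1 then 1 else 0) := by
    intro i
    rcases hb i with h | h <;> rw [h] <;> split <;> omega
  rw [Finset.sum_congr rfl (fun i _ => this i), Finset.sum_add_distrib,
    Finset.sum_const, Finset.card_univ, Fintype.card_fin, ← Finset.card_filter]
  ring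

lemma GC.stage2 (hp : 1 < p) {k q : ℕ} (hq : 0 < q) (hqp : q < p)
    (b : Fin p → ℕ) (hb : ∀ i, b i = k ∨ b i = k + 1) (hb' : ∑ i, b i = k * p + q)
    (a : Fin p → ℕ) (ha : ∀ i, a i = k ∨ a i = k + 1) (ha' : ∑ i, a i = k * p + q) :
    Relation.ReflTransGen (Move p) a b := by
  classical
  obtain ⟨a', hre, hD', s, hsp, hhigh, hlow⟩ :=
    GC.pack hp k p le_rfl a ha (fun t ht htp => absurd htp (by omega))
  have hsum' : ∑ i, a' i = k * p + q := by rw [GC.reach_sum hp hre, ha']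
  -- compute the sum of a' to determine s
  have hsum2 : ∑ i, a' i = s * k + (p - s) * (k + 1) := by
    have h0 : ∑ i, a' i = ∑ t ∈ Finset.range p, a' (t : Fin p) := by
      rw [← Fin.sum_univ_eq_sum_range (fun t => a' (t : Fin p)) p]
      apply Finset.sum_congr rfl
      intro i _
      rw [Fin.cast_val_eq_self]
    rw [h0, Finset.range_eq_Ico, ← Finset.sum_Ico_consecutive _ (Nat.zero_le s) hsp]
    have e1 : ∑ t ∈ Finset.Ico 0 s, a' (t : Fin p) = s * k :=
      calc ∑ t ∈ Finset.Ico 0 s, a' (t : Fin p) = ∑ _t ∈ Finset.Ico 0 s, k :=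
            Finset.sum_congr rfl (fun t ht => hlow t (Finset.mem_Ico.mp ht).2)
        _ = s * k := by rw [Finset.sum_const, Nat.card_Ico, Nat.sub_zero, smul_eq_mul]
    have e2 : ∑ t ∈ Finset.Ico s p, a' (t : Fin p) = (p - s) * (k + 1) :=
      calc ∑ t ∈ Finset.Ico s p, a' (t : Fin p) = ∑ _t ∈ Finset.Ico s p, (k + 1) :=
            Finset.sum_congr rfl (fun t ht =>
              hhigh t (Finset.mem_Ico.mp ht).1 (Finset.mem_Ico.mp ht).2)
        _ = (p - s) * (k + 1) := by rw [Finset.sum_const, Nat.card_Ico, smul_eq_mul]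
    rw [e1, e2]
  have hs : s = p - q := by
    have e3 : s * k + (p - s) * (k + 1) = k * p + (p - s) := by
      have hps : s + (p - s) = p := by omega
      calc s * k + (p - s) * (k + 1) = (s + (p - s)) * k + (p - s) := by ring
        _ = p * k + (p - s) := by rw [hps]
        _ = k * p + (p - s) := by ring
    have : k * p + (p - s) = k * p + q := by rw [← e3, ← hsum2, hsum']
    omega
  subst hs
  -- token count of b
  have hbq : (Finset.univ.filter (fun i : Fin p => b i = k + 1)).card = q := by
    have := GC.dual_sum k b hb
    rw [hb'] at this
    have h2 : k * p = p * k := by ring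
    omega
  set c' : Fin p := ((p - q : ℕ) : Fin p) with hc'
  have hcard : ((Finset.range p).filter (fun u : ℕ => b (c' + (u : Fin p)) = k + 1)).card = q := by
    rw [Finset.card_filter]
    have h0 : ∑ t ∈ Finset.range p, (if b (c' + (t : Fin p)) = k + 1 then 1 else 0)
        = ∑ i : Fin p, (if b (c' + i) = k + 1 then 1 else 0) := by
      rw [← Fin.sum_univ_eq_sum_range (fun t => if b (c' + (t : Fin p)) = k + 1 then 1 else 0) p]
      apply Finset.sum_congr rfl
      intro i _
      rw [Fin.cast_val_eq_self]
    have hcomp := Equiv.sum_comp (Equiv.addLeft c') (fun j : Fin p => if b j = k + 1 then 1 else 0)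
    simp only [Equiv.coe_addLeft] at hcomp
    rw [h0]; refine hcomp.trans ?_; rw [← Finset.card_filter]
    exact hbq
  have hshift : ∀ t : ℕ, c' + (t : Fin p) = ((p - q + t : ℕ) : Fin p) := by
    intro t; rw [hc', Nat.cast_add]
  refine Relation.ReflTransGen.trans hre (GC.unpack hp k b hb c' p le_rfl a' hD' ?_ ?_ ?_)
  · intro t ht
    rw [hcard] at ht
    rw [hshift t]
    exact hhigh (p - q + t) (by omega) (by omega)
  · intro t ht1 ht2
    rw [hcard] at ht1
    rw [hshift t]
    have hw : ((p - q + t : ℕ) : Fin p) = ((p - q + t - p : ℕ) : Fin p) := by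
      have h5 : ((p - q + t : ℕ) : Fin p) = (((p - q + t - p) + p : ℕ) : Fin p) := by
        congr 1; omega
      rw [h5, Nat.cast_add, Fin.natCast_self, add_zero]
    rw [hw]
    exact hlow (p - q + t - p) (by omega)
  · intro t ht1 ht2; omega

end Stage2


/-- If `0 < q < p`, from any configuration one can reach any dual configuration. -/
theorem stmt6 (p k q : ℕ) [NeZero p] (hq : 0 < q) (hqp : q < p)
    (O b : Fin p → ℕ) (hO : ∑ i, O i = k * p + q)
    (hb : ∀ i, b i = k ∨ b i = k + 1) (hb' : ∑ i, b i = k * p + q) :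
    Relation.ReflTransGen (Move p) O b := by
  have hp : 1 < p := by omega
  suffices H : ∀ N (a : Fin p → ℕ), (∑ j, (a j)^2) = N → ∑ i, a i = k * p + q →
      Relation.ReflTransGen (Move p) a b from H _ O rfl hO
  intro N
  induction N using Nat.strong_induction_on with
  | _ N ih =>
    intro a hPhi hsum
    by_cases hflat : ∀ i j, a i ≤ a j + 1
    · -- a is already dual : conclude via stage 2
      obtain ⟨i₀, -, hmin⟩ := Finset.exists_min_image Finset.univ a
        ⟨⟨0, by omega⟩, Finset.mem_univ _⟩
      set m := a i₀ with hm
      have hub : ∀ x, a x ≤ m + 1 := fun x => hflat x i₀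
      have hlb : ∀ x, m ≤ a x := fun x => hmin x (Finset.mem_univ x)
      have hsl : p * m ≤ ∑ i, a i := by
        calc p * m = ∑ _i : Fin p, m := by
              rw [Finset.sum_const, Finset.card_univ, Fintype.card_fin, smul_eq_mul]
          _ ≤ ∑ i, a i := Finset.sum_le_sum (fun i _ => hlb i)
      have hsu : ∑ i, a i ≤ p * (m + 1) := by
        calc ∑ i, a i ≤ ∑ _i : Fin p, (m + 1) := Finset.sum_le_sum (fun i _ => hub i)
          _ = p * (m + 1) := by
              rw [Finset.sum_const, Finset.card_univ, Fintype.card_fin, smul_eq_mul]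
      have h1 : p * m < p * (k + 1) := by
        calc p * m ≤ k * p + q := hsum ▸ hsl
          _ < (k + 1) * p := by
              have : (k + 1) * p = k * p + p := by ring
              omega
          _ = p * (k + 1) := by ring
      have h2 : p * k < p * (m + 1) := by
        calc p * k = k * p := by ring
          _ < k * p + q := by omega
          _ ≤ p * (m + 1) := hsum ▸ hsu
      have hmk : m = k := by
        have g1 := Nat.lt_of_mul_lt_mul_left h1
        have g2 := Nat.lt_of_mul_lt_mul_left h2
        omega
      have hdual : ∀ i, a i = k ∨ a i = k + 1 := by
        intro i
        have := hub i
        have := hlb i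
        omega
      exact GC.stage2 hp hq hqp b hb hb' a hdual hsum
    · push_neg at hflat
      obtain ⟨i1, j1, hij⟩ := hflat
      obtain ⟨a', hre, hsumeq, hlt⟩ := GC.descend hp a ⟨i1, j1, hij⟩
      exact Relation.ReflTransGen.trans hre
        (ih _ (hPhi ▸ hlt) a' rfl (hsumeq.trans hsum))
end

section
/- Let O be a configuration and let a, b be non-dual configurations each reachable from O by legal moves, with (well-defined) shot vectors s(O,a) and s(O,b). Then b is reachable from a by a nonempty sequence of legal moves if and only if s(O,a) < s(O,b) (componentwise ≤ with strict inequality somewhere). -/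
open Fin.NatCast

section
variable {p : ℕ} [NeZero p]

lemma legal_ne {a : Fin p → ℕ} {i : Fin p} (h : legal p a i) : i + 1 ≠ i := by
  intro e; rw [legal, e] at h; exact lt_irrefl _ h

lemma step_apply (a : Fin p → ℕ) (i : Fin p) (hne : i + 1 ≠ i) (k : Fin p) :
    step p a i k = if k = i + 1 then a (i+1) + 1 else if k = i then a i - 1 else a k := by
  unfold step
  rcases eq_or_ne k (i+1) with h|h
  · subst h; rw [if_pos rfl, Function.update_self]
  · rw [Function.update_of_ne h, if_neg h]
    rcases eq_or_ne k i with h2|h2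
    · subst h2; rw [if_pos rfl, Function.update_self]
    · rw [if_neg h2, Function.update_of_ne h2]

lemma step_cast (a : Fin p → ℕ) (i : Fin p) (h : legal p a i) (k : Fin p) :
    ((step p a i k : ℕ) : ℤ) =
      (a k : ℤ) + (if k = i + 1 then 1 else 0) - (if k = i then 1 else 0) := by
  have hne := legal_ne h
  have h1 : 1 ≤ a i := Nat.lt_of_le_of_lt (Nat.zero_le _) h
  rw [step_apply a i hne k]
  rcases eq_or_ne k (i+1) with h2|h2
  · subst h2
    rw [if_pos rfl, if_pos rfl, if_neg hne]
    push_cast; ring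
  · rcases eq_or_ne k i with h3|h3
    · subst h3
      rw [if_neg h2, if_pos rfl, if_neg h2, if_pos rfl]
      push_cast [h1]; ring
    · rw [if_neg h2, if_neg h3, if_neg h2, if_neg h3]
      push_cast; ring

lemma sum_step_sub (a : Fin p → ℕ) (i : Fin p) (h : legal p a i) (s : Finset (Fin p)) :
    ∑ k ∈ s, ((step p a i k : ℕ) : ℤ) =
      ∑ k ∈ s, (a k : ℤ) + (if i+1 ∈ s then 1 else 0) - (if i ∈ s then 1 else 0) := by
  have : ∀ k ∈ s, ((step p a i k : ℕ) : ℤ) =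
      (a k : ℤ) + ((if k = i + 1 then (1:ℤ) else 0) - (if k = i then 1 else 0)) := by
    intro k _; rw [step_cast a i h k]; ring
  rw [Finset.sum_congr rfl this, Finset.sum_add_distrib, Finset.sum_sub_distrib,
    Finset.sum_ite_eq' s (i+1) (fun _ => (1:ℤ)), Finset.sum_ite_eq' s i (fun _ => (1:ℤ))]
  ring

lemma sum_step_total (a : Fin p → ℕ) (i : Fin p) (h : legal p a i) :
    ∑ k, step p a i k = ∑ k, a k := by
  have := sum_step_sub a i h Finset.univ
  simp only [Finset.mem_univ, if_pos] at this
  have h2 : ((∑ k, step p a i k : ℕ) : ℤ) = ((∑ k, a k : ℕ) : ℤ) := by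
    push_cast
    rw [this]; ring
  exact_mod_cast h2

/-- prefix sum as an integer -/
def Sg (a : Fin p → ℕ) (j : Fin p) : ℤ := ∑ k ∈ Finset.univ.filter (· ≤ j), (a k : ℤ)

lemma Sg_step (a : Fin p → ℕ) (i : Fin p) (h : legal p a i) (j : Fin p) :
    Sg (step p a i) j = Sg a j + (if i+1 ≤ j then 1 else 0) - (if i ≤ j then 1 else 0) := by
  unfold Sg
  rw [sum_step_sub a i h]
  simp [Finset.mem_filter]

lemma sq_sum_step (a : Fin p → ℕ) (i : Fin p) (h : legal p a i) :
    ∑ k, ((step p a i k : ℕ) : ℤ)^2 = ∑ k, (a k:ℤ)^2 + 2*((a (i+1) : ℤ) - a i + 1) := by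
  have hne := legal_ne h
  have h1 : 1 ≤ a i := Nat.lt_of_le_of_lt (Nat.zero_le _) h
  have key : ∀ k ∈ Finset.univ, ((step p a i k : ℕ) : ℤ)^2 =
      (a k:ℤ)^2 + ((if k = i+1 then 2*(a (i+1):ℤ)+1 else 0) + (if k = i then 1 - 2*(a i:ℤ) else 0)) := by
    intro k _
    rw [step_apply a i hne k]
    rcases eq_or_ne k (i+1) with h2|h2
    · subst h2
      rw [if_pos rfl, if_pos rfl, if_neg hne]
      push_cast; ring
    · rcases eq_or_ne k i with h3|h3
      · subst h3
        rw [if_neg h2, if_pos rfl, if_neg h2, if_pos rfl]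
        push_cast [h1]; ring
      · rw [if_neg h2, if_neg h3, if_neg h2, if_neg h3]
        ring
  rw [Finset.sum_congr rfl key, Finset.sum_add_distrib, Finset.sum_add_distrib,
    Finset.sum_ite_eq' Finset.univ (i+1) (fun _ => 2*((a (i+1):ℕ):ℤ)+1),
    Finset.sum_ite_eq' Finset.univ i (fun _ => 1 - 2*((a i:ℕ):ℤ))]
  simp only [Finset.mem_univ, if_pos]
  ring

lemma delta_count (i j : Fin p) (hj : j ≠ lastIdx p) (hne : i + 1 ≠ i) :
    ((if i+1 ≤ j then (1:ℤ) else 0) - (if i ≤ j then 1 else 0))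
      = (if i = lastIdx p then 1 else 0) - (if i = j then 1 else 0) := by
  have hp0 : 0 < p := Nat.pos_of_ne_zero (NeZero.ne p)
  have hp : 1 < p := by
    by_contra hcon
    push_neg at hcon
    have : p = 1 := le_antisymm hcon hp0
    subst this
    exact hne (Subsingleton.elim _ _)
  have hone : (1 : Fin p).val = 1 := by
    rw [Fin.val_one']
    exact Nat.mod_eq_of_lt hp
  have hadd : (i+1).val = (i.val + 1) % p := by
    rw [Fin.val_add, hone]
  have hjval : j.val ≠ p - 1 := fun hc => hj (Fin.ext hc)
  have hjlt : j.val < p := j.isLt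
  have hilt : i.val < p := i.isLt
  rcases eq_or_ne i.val (p-1) with hi|hi
  · have h0 : (i+1).val = 0 := by
      rw [hadd, hi, Nat.sub_add_cancel hp0]
      exact Nat.mod_self p
    have hi_last : i = lastIdx p := Fin.ext hi
    rw [if_pos hi_last]
    have hle : i + 1 ≤ j := by rw [Fin.le_def, h0]; exact Nat.zero_le _
    rw [if_pos hle]
    have h2 : ¬ i ≤ j := by rw [Fin.le_def, hi]; omega
    rw [if_neg h2]
    have h3 : i ≠ j := by
      intro hc
      exact hjval (by rw [← hc, hi])
    rw [if_neg h3]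
  · have h0 : (i+1).val = i.val + 1 := by
      rw [hadd]; apply Nat.mod_eq_of_lt; omega
    have h4 : i ≠ lastIdx p := by
      intro hc
      exact hi (by rw [hc]; rfl)
    rw [if_neg h4]
    rcases eq_or_ne i j with he|he
    · subst he
      rw [if_pos rfl, if_pos (le_refl i)]
      have : ¬ (i+1 ≤ i) := by rw [Fin.le_def, h0]; omega
      rw [if_neg this]
    · rw [if_neg he]
      have hv : i.val ≠ j.val := fun hc => he (Fin.ext hc)
      rcases Nat.lt_or_ge i.val j.val with hlt|hge
      · rw [if_pos (by rw [Fin.le_def, h0]; omega), if_pos (by rw [Fin.le_def]; omega)]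
        ring
      · rw [if_neg (by rw [Fin.le_def, h0]; omega), if_neg (by rw [Fin.le_def]; omega)]

lemma playList_Sg : ∀ (C : List (Fin p)) (O c : Fin p → ℕ), playList p O C c →
    ∀ j, j ≠ lastIdx p →
    Sg c j = Sg O j - C.count j + C.count (lastIdx p)
  | [], O, c, h, j, hj => by
      rw [playList] at h
      subst h; simp
  | i :: C', O, c, h, j, hj => by
      obtain ⟨hleg, hplay⟩ := h
      have ih := playList_Sg C' (step p O i) c hplay j hj
      rw [ih, Sg_step O i hleg j]
      have hd := delta_count i j hj (legal_ne hleg)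
      rw [List.count_cons, List.count_cons]
      have e1 : (i == j) = decide (i = j) := rfl
      push_cast
      rcases eq_or_ne i j with he|he <;> rcases eq_or_ne i (lastIdx p) with he2|he2 <;>
        simp [he, he2] at hd ⊢ <;> omega

lemma loop_count_eq {a : Fin p → ℕ} {R : List (Fin p)} (h : playList p a R a) (j : Fin p) :
    R.count j = R.count (lastIdx p) := by
  rcases eq_or_ne j (lastIdx p) with rfl|hj
  · rfl
  · have := playList_Sg R a a h j hj
    omega

lemma legal_pres {a : Fin p → ℕ} {i j : Fin p} (hi : legal p a i) (hj : legal p a j)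
    (hji : j ≠ i) : legal p (step p a i) j := by
  have hne := legal_ne hi
  rw [legal, step_apply a i hne (j+1), step_apply a i hne j]
  have hc1 : j + 1 ≠ i + 1 := fun hc => hji (add_right_cancel hc)
  rw [if_neg hc1]
  rcases eq_or_ne (j+1) i with h2|h2
  · rw [if_pos h2]
    rcases eq_or_ne j (i+1) with h3|h3
    · rw [if_pos h3]
      have e1 : a (j+1) = a i := by rw [h2]
      have e2 : a j = a (i+1) := by rw [h3]
      rw [legal] at hi hj
      omega
    · rw [if_neg h3, if_neg hji]
      have e1 : a (j+1) = a i := by rw [h2]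
      rw [legal] at hi hj
      omega
  · rw [if_neg h2]
    rcases eq_or_ne j (i+1) with h3|h3
    · rw [if_pos h3]
      have e2 : a j = a (i+1) := by rw [h3]
      rw [legal] at hi hj
      omega
    · rw [if_neg h3, if_neg hji]
      exact hj

lemma step_comm {a : Fin p → ℕ} {i j : Fin p} (hi : legal p a i) (hj : legal p a j)
    (hij : i ≠ j) : step p (step p a i) j = step p (step p a j) i := by
  have hpi : legal p (step p a i) j := legal_pres hi hj (Ne.symm hij)
  have hpj : legal p (step p a j) i := legal_pres hj hi hij
  funext k
  have key : ((step p (step p a i) j k : ℕ) : ℤ) = ((step p (step p a j) i k : ℕ) : ℤ) := by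
    rw [step_cast _ j hpi k, step_cast a i hi k, step_cast _ i hpj k, step_cast a j hj k]
    ring
  exact_mod_cast key

lemma playList_append : ∀ (L : List (Fin p)) (M : List (Fin p)) (a c : Fin p → ℕ),
    playList p a (L ++ M) c ↔ ∃ b, playList p a L b ∧ playList p b M c
  | [], M, a, c => by
      simp only [List.nil_append, playList]
      constructor
      · intro h; exact ⟨a, rfl, h⟩
      · rintro ⟨b, rfl, h⟩; exact h
  | i :: L, M, a, c => by
      rw [List.cons_append]
      constructor
      · rintro ⟨hleg, h⟩
        obtain ⟨b, h1, h2⟩ := (playList_append L M _ c).mp h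
        exact ⟨b, ⟨hleg, h1⟩, h2⟩
      · rintro ⟨b, ⟨hleg, h1⟩, h2⟩
        exact ⟨hleg, (playList_append L M _ c).mpr ⟨b, h1, h2⟩⟩

lemma pull_front : ∀ (M : List (Fin p)) (x z : Fin p → ℕ) (i : Fin p), legal p x i → i ∈ M →
    playList p x M z → playList p x (i :: M.erase i) z
  | [], x, z, i, _, hmem, _ => absurd hmem List.not_mem_nil
  | j :: M', x, z, i, hleg, hmem, hplay => by
      obtain ⟨hlegj, hplay'⟩ := hplay
      rcases eq_or_ne j i with rfl|hne
      · rw [List.erase_cons_head]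
        exact ⟨hleg, hplay'⟩
      · have hmem' : i ∈ M' := by
          rcases List.mem_cons.mp hmem with h|h
          · exact absurd h.symm hne
          · exact h
        have hlegi' : legal p (step p x j) i := legal_pres hlegj hleg hne.symm
        have ih := pull_front M' (step p x j) z i hlegi' hmem' hplay'
        obtain ⟨hlegi2, hrest⟩ := ih
        rw [List.erase_cons_tail (by simp [hne])]
        refine ⟨hleg, ?_⟩
        rw [playList]
        refine ⟨legal_pres hleg hlegj hne, ?_⟩
        rw [step_comm hleg hlegj (Ne.symm hne)]
        exact hrest

lemma exchange : ∀ (L : List (Fin p)) (M : List (Fin p)) (x y z : Fin p → ℕ),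
    playList p x L y → playList p x M z → (∀ i, L.count i ≤ M.count i) →
    ∃ N, playList p y N z ∧ ∀ i, N.count i = M.count i - L.count i
  | [], M, x, y, z, hL, hM, _ => by
      rw [playList] at hL
      subst hL
      exact ⟨M, hM, fun i => by simp⟩
  | i :: L', M, x, y, z, hL, hM, hcount => by
      obtain ⟨hleg, hplay⟩ := hL
      have hipos : 0 < M.count i := by
        have := hcount i
        simp [List.count_cons] at this
        omega
      have hmem : i ∈ M := List.count_pos_iff.mp hipos
      have hpf := pull_front M x z i hleg hmem hM
      obtain ⟨_, hrest⟩ := hpf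
      have hcount' : ∀ j, L'.count j ≤ (M.erase i).count j := by
        intro j
        have hcj := hcount j
        rcases eq_or_ne j i with rfl|hne
        · rw [List.count_erase_self]
          simp [List.count_cons] at hcj
          omega
        · rw [List.count_erase_of_ne hne]
          simp [List.count_cons, Ne.symm hne] at hcj
          omega
      obtain ⟨N, hN, hNc⟩ := exchange L' (M.erase i) (step p x i) y z hplay hrest hcount'
      refine ⟨N, hN, fun j => ?_⟩
      have := hNc j
      rcases eq_or_ne j i with rfl|hne
      · rw [List.count_erase_self] at this
        simp [List.count_cons] at this ⊢
        omega
      · rw [List.count_erase_of_ne hne] at this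
        simp [List.count_cons, Ne.symm hne] at this ⊢
        omega

end

def swapPlay (p : ℕ) [NeZero p] : (Fin p → ℕ) → List (Fin p) → (Fin p → ℕ) → Prop
  | a, [], b => b = a
  | a, i :: L, b => a i = a (i+1) + 1 ∧ swapPlay p (step p a i) L b

section
variable {p : ℕ} [NeZero p]

lemma swap_legal {a : Fin p → ℕ} {i : Fin p} (h : a i = a (i+1) + 1) : legal p a i := by
  rw [legal, h]; omega

lemma swapPlay_playList : ∀ (L : List (Fin p)) (a b : Fin p → ℕ),
    swapPlay p a L b → playList p a L b
  | [], a, b, h => h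
  | i :: L, a, b, h => ⟨swap_legal h.1, swapPlay_playList L _ b h.2⟩

lemma swapPlay_append : ∀ (L M : List (Fin p)) (a b c : Fin p → ℕ),
    swapPlay p a L b → swapPlay p b M c → swapPlay p a (L ++ M) c
  | [], M, a, b, c, h1, h2 => by
      rw [swapPlay] at h1; subst h1; exact h2
  | i :: L, M, a, b, c, h1, h2 => by
      rw [List.cons_append]
      exact ⟨h1.1, swapPlay_append L M _ b c h1.2 h2⟩

lemma playList_sq : ∀ (L : List (Fin p)) (a c : Fin p → ℕ), playList p a L c →
    (∑ k, ((c k : ℕ):ℤ)^2) ≤ (∑ k, ((a k : ℕ):ℤ)^2) ∧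
      ((∑ k, ((c k : ℕ):ℤ)^2) = (∑ k, ((a k : ℕ):ℤ)^2) → swapPlay p a L c)
  | [], a, c, h => by
      rw [playList] at h; subst h
      exact ⟨le_refl _, fun _ => rfl⟩
  | i :: L, a, c, h => by
      obtain ⟨hleg, hplay⟩ := h
      have ih := playList_sq L (step p a i) c hplay
      have hstep := sq_sum_step a i hleg
      have hle : (a (i+1) : ℤ) + 1 ≤ (a i : ℤ) := by
        have := hleg; rw [legal] at this; exact_mod_cast this
      constructor
      · calc (∑ k, ((c k : ℕ):ℤ)^2) ≤ ∑ k, ((step p a i k : ℕ):ℤ)^2 := ih.1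
          _ ≤ ∑ k, ((a k : ℕ):ℤ)^2 := by rw [hstep]; linarith
      · intro heq
        have h1 : (∑ k, ((c k : ℕ):ℤ)^2) ≤ ∑ k, ((step p a i k : ℕ):ℤ)^2 := ih.1
        have h2 : (∑ k, ((step p a i k : ℕ):ℤ)^2) ≤ ∑ k, ((a k : ℕ):ℤ)^2 := by
          rw [hstep]; linarith
        have h3 : (∑ k, ((step p a i k : ℕ):ℤ)^2) = ∑ k, ((a k : ℕ):ℤ)^2 := le_antisymm h2 (by omega)
        have hswap : a i = a (i+1) + 1 := by
          rw [hstep] at h3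
          have : (a (i+1) : ℤ) - a i + 1 = 0 := by linarith
          omega
        exact ⟨hswap, ih.2 (by omega)⟩

lemma playList_transGen : ∀ (L : List (Fin p)) (a b : Fin p → ℕ), L ≠ [] →
    playList p a L b → Relation.TransGen (Move p) a b
  | [], _, _, h, _ => absurd rfl h
  | [i], a, b, _, h => Relation.TransGen.single ⟨i, h.1, h.2⟩
  | i :: j :: L, a, b, _, h =>
      Relation.TransGen.head ⟨i, h.1, rfl⟩
        (playList_transGen (j :: L) (step p a i) b (by simp) h.2)

lemma transGen_playList {a b : Fin p → ℕ} (h : Relation.TransGen (Move p) a b) :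
    ∃ L, L ≠ [] ∧ playList p a L b := by
  induction h with
  | single hab =>
      obtain ⟨i, hl, he⟩ := hab
      exact ⟨[i], by simp, ⟨hl, he⟩⟩
  | tail _ hbc ih =>
      obtain ⟨L, hne, hL⟩ := ih
      obtain ⟨i, hl, he⟩ := hbc
      exact ⟨L ++ [i], by simp, (playList_append L [i] _ _).mpr ⟨_, hL, ⟨hl, he⟩⟩⟩

end

section
variable {p : ℕ} [NeZero p]

lemma fin_cast_ne_zero {d : ℕ} (h1 : 0 < d) (h2 : d < p) : (d : Fin p) ≠ 0 := by
  intro h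
  have hv : ((d : ℕ) : Fin p).val = d := Fin.val_cast_of_lt h2
  rw [h] at hv
  simp at hv
  omega

lemma fin_add_cast_ne (i : Fin p) {d : ℕ} (h1 : 0 < d) (h2 : d < p) : i + (d : Fin p) ≠ i := by
  intro h
  exact fin_cast_ne_zero h1 h2 (add_eq_left.mp h)

lemma fin_cast_succ {d : ℕ} (h1 : 1 ≤ d) : ((d - 1 : ℕ) : Fin p) + 1 = (d : Fin p) := by
  have : (((d-1) + 1 : ℕ) : Fin p) = ((d-1 : ℕ) : Fin p) + 1 := by push_cast; ring
  rw [← this, Nat.sub_add_cancel h1]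

lemma swap_step_bounds {a : Fin p → ℕ} {q : Fin p} {m M : ℕ}
    (hswap : a q = a (q+1) + 1) (hbl : ∀ k, m ≤ a k) (hbu : ∀ k, a k ≤ M) :
    (∀ k, m ≤ step p a q k) ∧ (∀ k, step p a q k ≤ M) := by
  have hne := legal_ne (swap_legal hswap)
  constructor <;>
  · intro k
    have b1 := hbl q; have b2 := hbu q; have b3 := hbl (q+1); have b4 := hbu (q+1)
    have b5 := hbl k; have b6 := hbu k
    rw [step_apply a q hne k]
    split_ifs <;> omega

lemma inner (m M : ℕ) (hMm : m + 2 ≤ M) (i : Fin p) (d : ℕ) (hd1 : 1 ≤ d) (hdp : d < p) :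
    ∀ (Q : List (Fin p)) (a c : Fin p → ℕ), swapPlay p a Q c →
    (∀ k, m ≤ a k) → (∀ k, a k ≤ M) → a i = M → a (i + (d : Fin p)) = m →
    (i ∈ Q ∨ i + ((d-1 : ℕ) : Fin p) ∈ Q) →
    ∃ Q1 j Q2 e, Q = Q1 ++ j :: Q2 ∧ swapPlay p a Q1 e ∧
      (∀ k, m ≤ e k) ∧ (∀ k, e k ≤ M) ∧ e i = M ∧ e (i + (d : Fin p)) = m ∧
      (j = i ∨ j = i + ((d-1 : ℕ) : Fin p)) ∧ swapPlay p e (j :: Q2) c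
  | [], a, c, _, _, _, _, _, hor => by
      rcases hor with h|h <;> exact absurd h List.not_mem_nil
  | q :: Q', a, c, hplay, hbl, hbu, hMi, hmi, hor => by
      obtain ⟨hswap, hrest⟩ := hplay
      by_cases hq : q = i ∨ q = i + ((d-1 : ℕ) : Fin p)
      · exact ⟨[], q, Q', a, rfl, rfl, hbl, hbu, hMi, hmi, hq, ⟨hswap, hrest⟩⟩
      · push_neg at hq
        obtain ⟨hq1, hq2⟩ := hq
        have hne := legal_ne (swap_legal hswap)
        -- q + 1 ≠ i
        have hq3 : q + 1 ≠ i := by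
          intro h
          have : a (q+1) = a i := by rw [h]
          have := hbu q
          omega
        -- q ≠ i + d
        have hq4 : q ≠ i + (d : Fin p) := by
          intro h
          have e1 : a q = m := by rw [h]; exact hmi
          have := hbl (q+1)
          omega
        -- q + 1 ≠ i + d
        have hq5 : q + 1 ≠ i + (d : Fin p) := by
          intro h
          apply hq2
          apply add_right_cancel (b := (1 : Fin p))
          rw [h, ← fin_cast_succ hd1, ← add_assoc]
        -- values at i and i + d unchanged
        have hMi' : step p a q i = M := by
          rw [step_apply a q hne i, if_neg (Ne.symm hq3), if_neg (Ne.symm hq1)]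
          exact hMi
        have hmi' : step p a q (i + (d : Fin p)) = m := by
          rw [step_apply a q hne _, if_neg (Ne.symm hq5), if_neg (Ne.symm hq4)]
          exact hmi
        obtain ⟨hbl', hbu'⟩ := swap_step_bounds hswap hbl hbu
        have hor' : i ∈ Q' ∨ i + ((d-1 : ℕ) : Fin p) ∈ Q' := by
          rcases hor with h|h
          · left
            rcases List.mem_cons.mp h with h2|h2
            · exact absurd h2.symm hq1
            · exact h2
          · right
            rcases List.mem_cons.mp h with h2|h2
            · exact absurd h2.symm hq2
            · exact h2
        obtain ⟨Q1, j, Q2, e, hQeq, hQ1, c1, c2, c3, c4, c5, c6⟩ :=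
          inner m M hMm i d hd1 hdp Q' (step p a q) c hrest hbl' hbu' hMi' hmi' hor'
        exact ⟨q :: Q1, j, Q2, e, by rw [hQeq, List.cons_append], ⟨hswap, hQ1⟩,
          c1, c2, c3, c4, c5, c6⟩

end

section
variable {p : ℕ} [NeZero p]

lemma core (m M : ℕ) (hMm : m + 2 ≤ M) :
    ∀ (d : ℕ), 1 ≤ d → d < p → ∀ (a : Fin p → ℕ) (i : Fin p),
      (∀ k, m ≤ a k) → (∀ k, a k ≤ M) → a i = M → a (i + (d : Fin p)) = m →
      ∀ R, R ≠ [] → swapPlay p a R a → False := by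
  intro d
  induction d with
  | zero => omega
  | succ d ih =>
    intro _ hdp a i hbl hbu hMi hmi R hne hloop
    have hcnt : ∀ j : Fin p, 1 ≤ R.count j := by
      have hpl := swapPlay_playList R a a hloop
      obtain ⟨q, hq⟩ := List.exists_mem_of_ne_nil R hne
      have hqpos : 0 < R.count q := List.count_pos_iff.mpr hq
      intro j
      rw [loop_count_eq hpl j, ← loop_count_eq hpl q]
      exact hqpos
    have hmem : i ∈ R := List.count_pos_iff.mp (hcnt i)
    obtain ⟨Q1, j, Q2, e, hQeq, hQ1, hbl', hbu', hMi', hmi', hj, hj2⟩ :=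
      inner m M hMm i (d+1) (by omega) hdp R a a hloop hbl hbu hMi hmi (Or.inl hmem)
    obtain ⟨hswapj, hrest⟩ := hj2
    have hnej := legal_ne (swap_legal hswapj)
    rcases Nat.eq_zero_or_pos d with rfl|hd
    · -- distance 1 : contradiction immediately
      have hji : j = i := by
        rcases hj with h|h
        · exact h
        · rw [h]; simp
      subst hji
      have h1 : e (j + 1) = m := by
        have : ((0 + 1 : ℕ) : Fin p) = 1 := by norm_num
        rw [← this]
        exact hmi'
      rw [h1] at hswapj
      omega
    · -- distance d+1 ≥ 2 : produce a pair at distance d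
      have hp3 : 2 ≤ d + 1 := by omega
      have hsucc : ((d : ℕ) : Fin p) + 1 = ((d + 1 : ℕ) : Fin p) := by
        have := fin_cast_succ (p := p) (d := d + 1) (by omega)
        simpa using this
      have hcast_ne_zero : ((d + 1 : ℕ) : Fin p) ≠ 0 := fin_cast_ne_zero (by omega) hdp
      have hdcast_ne_zero : ((d : ℕ) : Fin p) ≠ 0 := fin_cast_ne_zero (by omega) (by omega)
      have hjalt : j = i ∨ j = i + ((d : ℕ) : Fin p) := by
        rcases hj with h|h
        · exact Or.inl h
        · right; rw [h]; norm_num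
      -- new configuration
      set e' := step p e j with he'
      obtain ⟨hbl2, hbu2⟩ := swap_step_bounds hswapj hbl' hbu'
      -- the new loop at e'
      have hloop' : swapPlay p e' (Q2 ++ (Q1 ++ [j])) e' := by
        apply swapPlay_append Q2 (Q1 ++ [j]) e' a e' hrest
        exact swapPlay_append Q1 [j] a e e' hQ1 ⟨hswapj, rfl⟩
      have hne' : Q2 ++ (Q1 ++ [j]) ≠ [] := by simp
      rcases hjalt with hji|hji
      · -- j = i : M moves to i+1
        subst hji
        have hM2 : e' (j + 1) = M := by
          rw [he', step_apply e j hnej (j+1), if_pos rfl]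
          omega
        have hm2 : e' (j + ((d + 1 : ℕ) : Fin p)) = m := by
          have n1 : j + ((d+1:ℕ) : Fin p) ≠ j + 1 := by
            intro h
            have h2 := add_left_cancel h
            have v1 : ((d+1:ℕ) : Fin p).val = d + 1 := Fin.val_cast_of_lt hdp
            have v2 : (1 : Fin p).val = 1 := by
              rw [Fin.val_one']
              exact Nat.mod_eq_of_lt (by omega)
            rw [h2] at v1
            omega
          have n2 : j + ((d+1:ℕ) : Fin p) ≠ j := fin_add_cast_ne j (by omega) hdp
          rw [he', step_apply e j hnej _, if_neg n1, if_neg n2]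
          exact hmi'
        have hpos : (j + 1) + ((d : ℕ) : Fin p) = j + ((d+1:ℕ) : Fin p) := by
          rw [add_assoc, add_comm (1 : Fin p) _, hsucc]
        exact ih hd (by omega) e' (j+1) hbl2 hbu2 hM2 (by rw [hpos]; exact hm2)
          (Q2 ++ (Q1 ++ [j])) hne' hloop'
      · -- j = i + d : m moves to i + d
        have hM2 : e' i = M := by
          have n1 : i ≠ j + 1 := by
            rw [hji, add_assoc, hsucc]
            intro h
            exact hcast_ne_zero (add_eq_left.mp h.symm)
          have n2 : i ≠ j := by
            rw [hji]
            intro h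
            exact hdcast_ne_zero (add_eq_left.mp h.symm)
          rw [he', step_apply e j hnej i, if_neg n1, if_neg n2]
          exact hMi'
        have hm2 : e' (i + ((d : ℕ) : Fin p)) = m := by
          rw [← hji, he', step_apply e j hnej j, if_neg (fun h => hnej h.symm), if_pos rfl]
          have hj1 : e (j + 1) = m := by
            rw [hji, add_assoc, hsucc]
            exact hmi'
          omega
        exact ih hd (by omega) e' i hbl2 hbu2 hM2 hm2 (Q2 ++ (Q1 ++ [j])) hne' hloop'

end

section
variable {p : ℕ} [NeZero p]

lemma loop_dual {b : Fin p → ℕ} {N : List (Fin p)} (hne : N ≠ []) (h : playList p b N b) :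
    Dual p (∑ k, b k) b := by
  have hswap : swapPlay p b N b := (playList_sq N b b h).2 rfl
  obtain ⟨i0, hi0⟩ : ∃ i0, ∀ k, b k ≤ b i0 := Finite.exists_max b
  obtain ⟨j0, hj0⟩ : ∃ j0, ∀ k, b j0 ≤ b k := Finite.exists_min b
  set M := b i0 with hMdef
  set m := b j0 with hmdef
  have hMm : M ≤ m + 1 := by
    by_contra hcon
    push_neg at hcon
    have hij : j0 ≠ i0 := by
      intro hc
      have h2 : m = b i0 := by rw [hmdef, hc]
      omega
    have hsub : (j0 - i0 : Fin p) ≠ 0 := fun hc => hij (by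
      have := sub_eq_zero.mp hc
      exact this)
    set d := (j0 - i0 : Fin p).val with hddef
    have hd1 : 1 ≤ d := by
      rcases Nat.eq_zero_or_pos d with h0|h0
      · exact absurd (Fin.ext h0) hsub
      · exact h0
    have hdp : d < p := (j0 - i0 : Fin p).isLt
    have hpos : i0 + (d : Fin p) = j0 := by
      rw [hddef, Fin.cast_val_eq_self, add_comm, sub_add_cancel]
    exact core m M (by omega) d hd1 hdp b i0 hj0 hi0 rfl (by rw [hpos]) N hne hswap
  obtain ⟨q, N', rfl⟩ : ∃ q N', N = q :: N' := by
    cases N with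
    | nil => exact absurd rfl hne
    | cons q N' => exact ⟨q, N', rfl⟩
  have hq : b q = b (q + 1) + 1 := hswap.1
  have hMm2 : M = m + 1 := by
    have h1 := hi0 q
    have h2 := hj0 (q+1)
    omega
  have hval : ∀ k, b k = m ∨ b k = m + 1 := by
    intro k
    have := hi0 k
    have := hj0 k
    omega
  set s := (Finset.univ.filter (fun k => b k = m + 1)).card with hsdef
  have hsum : ∑ k, b k = p * m + s := by
    have h1 : ∀ k ∈ Finset.univ, b k = m + (if b k = m + 1 then 1 else 0) := by
      intro k _
      rcases hval k with h|h
      · rw [h, if_neg (show m ≠ m + 1 from by omega)]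
        omega
      · rw [h, if_pos rfl]
    rw [Finset.sum_congr rfl h1, Finset.sum_add_distrib, Finset.sum_const,
      ← Finset.sum_filter, Finset.sum_const]
    simp [mul_comm]
    rfl
  have hs1 : 1 ≤ s := by
    have : i0 ∈ Finset.univ.filter (fun k => b k = m + 1) := by
      simp [← hMm2]
      rfl
    have := Finset.card_pos.mpr ⟨i0, this⟩
    omega
  have hs2 : s < p := by
    have hsub : Finset.univ.filter (fun k => b k = m + 1) ⊆ Finset.univ.erase j0 := by
      intro k hk
      simp only [Finset.mem_filter] at hk
      apply Finset.mem_erase.mpr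
      refine ⟨?_, Finset.mem_univ k⟩
      intro hc
      rw [hc] at hk
      omega
    have h3 := Finset.card_le_card hsub
    rw [Finset.card_erase_of_mem (Finset.mem_univ j0)] at h3
    have hp0 : 0 < p := Nat.pos_of_ne_zero (NeZero.ne p)
    simp only [Finset.card_univ, Fintype.card_fin] at h3
    omega
  have hdiv : (∑ k, b k) / p = m := by
    rw [hsum, Nat.mul_add_div (Nat.pos_of_ne_zero (NeZero.ne p)), Nat.div_eq_of_lt hs2]
    omega
  constructor
  · rw [hsum]
    intro hdvd
    have hds : p ∣ s := (Nat.dvd_add_right (Dvd.intro m rfl)).mp hdvd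
    have := Nat.le_of_dvd (by omega) hds
    omega
  · intro k
    rw [hdiv]
    exact hval k

end

section
variable {p : ℕ} [NeZero p]

lemma playList_sum : ∀ (L : List (Fin p)) (a c : Fin p → ℕ), playList p a L c →
    ∑ k, c k = ∑ k, a k
  | [], a, c, h => by rw [playList] at h; subst h; rfl
  | i :: L, a, c, h => by
      rw [playList_sum L (step p a i) c h.2, sum_step_total a i h.1]

end

/-- For non-dual `a`, `b` reachable from `O`, `b` is reachable from `a` by a nonempty
move sequence iff the shot vector of `O → a` is componentwise below (and somewhere
strictly below) that of `O → b`. -/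
theorem stmt11 (p n : ℕ) [NeZero p] (O a b : Fin p → ℕ)
    (hO : ∑ i, O i = n) (hna : ¬ Dual p n a) (hnb : ¬ Dual p n b)
    (C D : List (Fin p)) (hC : playList p O C a) (hD : playList p O D b) :
    Relation.TransGen (Move p) a b ↔
      (fun i => C.count i) < (fun i => D.count i) := by
  have hsumb : ∑ k, b k = n := by rw [playList_sum D O b hD, hO]
  constructor
  · intro htrans
    obtain ⟨E, hEne, hE⟩ := transGen_playList htrans
    have hCE : playList p O (C ++ E) b := (playList_append C E O b).mpr ⟨a, hC, hE⟩
    have hkey : ∀ j : Fin p, ((D.count j : ℤ)) - D.count (lastIdx p)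
        = (((C++E).count j : ℤ)) - (C++E).count (lastIdx p) := by
      intro j
      rcases eq_or_ne j (lastIdx p) with rfl|hj
      · ring
      · have h1 := playList_Sg (C++E) O b hCE j hj
        have h2 := playList_Sg D O b hD j hj
        omega
    set t : ℤ := (D.count (lastIdx p) : ℤ) - (C++E).count (lastIdx p) with ht
    have hshift : ∀ j, (D.count j : ℤ) = (C++E).count j + t := by
      intro j
      have := hkey j
      omega
    have ht0 : t = 0 := by
      rcases lt_trichotomy t 0 with hlt|h0|hgt
      · have hle : ∀ j, D.count j ≤ (C++E).count j := by
          intro j; have := hshift j; omega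
        obtain ⟨N, hN, hNc⟩ := exchange D (C++E) O b b hD hCE hle
        have hnonempty : N ≠ [] := by
          intro hc
          subst hc
          have h1 := hNc (lastIdx p)
          have h2 := hshift (lastIdx p)
          simp only [List.count_nil] at h1
          omega
        exact absurd (by rw [← hsumb]; exact loop_dual hnonempty hN) hnb
      · exact h0
      · have hle : ∀ j, (C++E).count j ≤ D.count j := by
          intro j; have := hshift j; omega
        obtain ⟨N, hN, hNc⟩ := exchange (C++E) D O b b hCE hD hle
        have hnonempty : N ≠ [] := by
          intro hc
          subst hc
          have h1 := hNc (lastIdx p)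
          have h2 := hshift (lastIdx p)
          simp only [List.count_nil] at h1
          omega
        exact absurd (by rw [← hsumb]; exact loop_dual hnonempty hN) hnb
    have hfin : ∀ j, D.count j = C.count j + E.count j := by
      intro j
      have h1 := hshift j
      rw [ht0, List.count_append] at h1
      omega
    rw [Pi.lt_def]
    constructor
    · rw [Pi.le_def]
      intro j
      show C.count j ≤ D.count j
      have := hfin j
      omega
    · obtain ⟨e0, he0⟩ := List.exists_mem_of_ne_nil E hEne
      refine ⟨e0, ?_⟩
      show C.count e0 < D.count e0
      have h1 := hfin e0
      have h2 : 0 < E.count e0 := List.count_pos_iff.mpr he0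
      omega
  · intro hlt
    rw [Pi.lt_def] at hlt
    obtain ⟨hle, j0, hj0⟩ := hlt
    have hle' : ∀ i, C.count i ≤ D.count i := Pi.le_def.mp hle
    have hj0' : C.count j0 < D.count j0 := hj0
    obtain ⟨N, hN, hNc⟩ := exchange C D O a b hC hD hle'
    apply playList_transGen N a b ?_ hN
    intro hc
    subst hc
    have h1 := hNc j0
    simp only [List.count_nil] at h1
    omega
end
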